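/- arXiv:math/0611791 — 5 statements merged into one kernel-verified Lean document; each statement's English description precedes it below -/
import Mathlib

section
/- Let r be a positive integer, a_1,…,a_r and b_1,…,b_r positive integers, q ∈ ℂ with 0 < |q| < 1, x ∈ ℝ with x ≥ 0, and let k be a positive odd integer. Then the k-th iterated derivative at t = 0 of the function t ↦ 2^r e^{xt} / ∏_{j=1}^r (q^{b_j} e^{a_j t} + 1) equals 2^r Σ_{n_1,…,n_r=0}^∞ (-1)^{n_1+⋯+n_r} q^{b_1 n_1+⋯+b_r n_r} (a_1 n_1+⋯+a_r n_r + x)^k, where the sum runs over all tuples (n_1,…,n_r) ∈ ℕ^r and converges absolutely. -/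
/-!
For `t` near `0` every factor `(q^{b_j} e^{a_j t} + 1)⁻¹` is a geometric series in
`-q^{b_j} e^{a_j t}`, so the generating function is an absolutely convergent exponential sum
`∑ₙ cₙ e^{ωₙ t}` over `n ∈ ℕ^r`, with `ωₙ = ∑ a_j n_j + x`. Such a sum may be differentiated
termwise: on a slightly smaller disc the factor `|ωₙ|^m` produced by `m` differentiations is
absorbed by the exponential margin, since `s^m ≤ m! δ^{-m} e^{δ s}`.
-/

open Filter Topology Complex

section PiProduct

variable {R β : Type*} [NormedCommRing R]

theorem summable_norm_prod_pi {r : ℕ} {f : Fin r → β → R}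
    (hf : ∀ j, Summable fun m => ‖f j m‖) :
    Summable fun n : Fin r → β => ‖∏ j, f j (n j)‖ := by
  induction r with
  | zero => exact .of_finite
  | succ r ih =>
    rw [← (Fin.consEquiv fun _ => β).summable_iff]
    simpa [Function.comp_def, Fin.consEquiv, Fin.prod_univ_succ] using
      (hf 0).mul_norm (ih fun j => hf j.succ)

theorem hasSum_prod_pi [CompleteSpace R] {r : ℕ} {f : Fin r → β → R} {s : Fin r → R}
    (hs : ∀ j, HasSum (f j) (s j)) (hf : ∀ j, Summable fun m => ‖f j m‖) :
    HasSum (fun n : Fin r → β => ∏ j, f j (n j)) (∏ j, s j) := by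
  induction r with
  | zero => simp
  | succ r ih =>
    rw [← (Fin.consEquiv fun _ => β).hasSum_iff, Fin.prod_univ_succ]
    have hsucc : ∀ j : Fin r, Summable fun m => ‖f j.succ m‖ := fun j => hf j.succ
    have hmul := summable_mul_of_summable_norm (hf 0) (summable_norm_prod_pi hsucc)
    have h := (hs 0).mul (ih (fun j => hs j.succ) hsucc) hmul
    simpa [Function.comp_def, Fin.consEquiv, Fin.prod_univ_succ] using h

end PiProduct

section ExponentialSeries

variable {ι : Type*}

theorem summable_mul_pow_mul_exp_of_lt {w s : ι → ℝ} (hw : ∀ n, 0 ≤ w n) (hs : ∀ n, 0 ≤ s n)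
    {R ρ : ℝ} (h : Summable fun n => w n * Real.exp (s n * R)) (hρR : ρ < R) (m : ℕ) :
    Summable fun n => w n * s n ^ m * Real.exp (s n * ρ) := by
  have hδ : 0 < R - ρ := sub_pos.2 hρR
  refine (h.mul_left (m.factorial / (R - ρ) ^ m)).of_nonneg_of_le
    (fun n => mul_nonneg (mul_nonneg (hw n) (pow_nonneg (hs n) m)) (Real.exp_nonneg _))
    fun n => ?_
  have hpow : s n ^ m ≤ m.factorial / (R - ρ) ^ m * Real.exp ((R - ρ) * s n) := by
    have := Real.pow_div_factorial_le_exp _ (mul_nonneg hδ.le (hs n)) m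
    rw [mul_pow, div_le_iff₀ (by positivity)] at this
    rw [div_mul_eq_mul_div, le_div_iff₀ (by positivity)]
    linarith
  have hexp : Real.exp (s n * R) = Real.exp ((R - ρ) * s n) * Real.exp (s n * ρ) := by
    rw [← Real.exp_add]; congr 1; ring
  calc w n * s n ^ m * Real.exp (s n * ρ)
      ≤ w n * (m.factorial / (R - ρ) ^ m * Real.exp ((R - ρ) * s n)) * Real.exp (s n * ρ) := by
        gcongr; exact hw n
    _ = m.factorial / (R - ρ) ^ m * (w n * Real.exp (s n * R)) := by rw [hexp]; ring

theorem hasSum_iteratedDeriv_tsum_mul_cexp_of_mem_ball {c ω : ι → ℂ} {R : ℝ}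
    (h : ∀ m, Summable fun n => ‖c n‖ * ‖ω n‖ ^ m * Real.exp (‖ω n‖ * R)) (m : ℕ) :
    ∀ t ∈ Metric.ball (0 : ℂ) R, HasSum (fun n => c n * ω n ^ m * cexp (ω n * t))
      (iteratedDeriv m (fun t => ∑' n, c n * cexp (ω n * t)) t) := by
  have hbound : ∀ k n, ∀ t ∈ Metric.ball (0 : ℂ) R,
      ‖c n * ω n ^ k * cexp (ω n * t)‖ ≤ ‖c n‖ * ‖ω n‖ ^ k * Real.exp (‖ω n‖ * R) := by
    intro k n t ht
    rw [norm_mul, norm_mul, norm_pow]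
    gcongr
    refine (norm_exp_le_exp_norm _).trans (Real.exp_le_exp.2 ?_)
    rw [norm_mul]
    gcongr
    exact (mem_ball_zero_iff.1 ht).le
  have hderiv : ∀ k n z, HasDerivAt (fun z => c n * ω n ^ k * cexp (ω n * z))
      (c n * ω n ^ (k + 1) * cexp (ω n * z)) z := fun k n z =>
    ((((hasDerivAt_id' z).const_mul (ω n)).cexp).const_mul (c n * ω n ^ k)).congr_deriv
      (by ring)
  induction m with
  | zero =>
    intro t ht
    simpa using (Summable.of_norm_bounded (h 0) fun n => hbound 0 n t ht).hasSum
  | succ m ih =>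
    intro t ht
    have hlocal : iteratedDeriv m (fun t => ∑' n, c n * cexp (ω n * t)) =ᶠ[𝓝 t]
        fun z => ∑' n, c n * ω n ^ m * cexp (ω n * z) := by
      filter_upwards [Metric.isOpen_ball.mem_nhds ht] with z hz using (ih z hz).tsum_eq.symm
    rw [iteratedDeriv_succ, hlocal.deriv_eq]
    have hsum := hasSum_deriv_of_summable_norm (h m)
      (fun n z _ => (hderiv m n z).differentiableAt.differentiableWithinAt)
      Metric.isOpen_ball (hbound m) ht
    simpa only [(hderiv m _ t).deriv] using hsum

theorem hasSum_iteratedDeriv_tsum_mul_cexp {c ω : ι → ℂ} {R : ℝ}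
    (h : Summable fun n => ‖c n‖ * Real.exp (‖ω n‖ * R)) (m : ℕ) {t : ℂ} (ht : ‖t‖ < R) :
    HasSum (fun n => c n * ω n ^ m * cexp (ω n * t))
      (iteratedDeriv m (fun t => ∑' n, c n * cexp (ω n * t)) t) := by
  obtain ⟨ρ, htρ, hρR⟩ := exists_between ht
  exact hasSum_iteratedDeriv_tsum_mul_cexp_of_mem_ball
    (fun m => summable_mul_pow_mul_exp_of_lt (fun n => norm_nonneg _) (fun n => norm_nonneg _)
      h hρR m) m t (mem_ball_zero_iff.2 htρ)

end ExponentialSeries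

section QEuler

variable {r : ℕ} (a b : Fin r → ℕ) (q : ℂ) (x : ℝ)

def qEulerCoeff (n : Fin r → ℕ) : ℂ :=
  2 ^ r * (-1) ^ (∑ j, n j) * q ^ (∑ j, b j * n j)

def qEulerExponent (n : Fin r → ℕ) : ℂ :=
  ((∑ j, a j * n j : ℕ) : ℂ) + x

theorem qEulerCoeff_mul_cexp (n : Fin r → ℕ) (t : ℂ) :
    qEulerCoeff b q n * cexp (qEulerExponent a x n * t) =
      2 ^ r * cexp (x * t) * ∏ j, (-(q ^ b j * cexp (a j * t))) ^ n j := by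
  have hfactor : ∀ j, (-(q ^ b j * cexp (a j * t))) ^ n j =
      (-1) ^ n j * q ^ (b j * n j) * cexp (n j * (a j * t)) := by
    intro j
    rw [neg_pow, mul_pow, ← pow_mul, ← Complex.exp_nat_mul, mul_assoc]
  have hexponent : qEulerExponent a x n * t = x * t + ∑ j, (n j : ℂ) * (a j * t) := by
    rw [qEulerExponent, add_mul, add_comm]
    push_cast
    rw [Finset.sum_mul]
    exact congrArg _ (Finset.sum_congr rfl fun j _ => by ring)
  rw [qEulerCoeff, hexponent, Complex.exp_add]
  simp only [hfactor, Finset.prod_mul_distrib, Finset.prod_pow_eq_pow_sum, ← Complex.exp_sum]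
  ring

theorem hasSum_qEulerCoeff_mul_cexp {t : ℂ} (ht : ∀ j, ‖q ^ b j * cexp (a j * t)‖ < 1) :
    HasSum (fun n => qEulerCoeff b q n * cexp (qEulerExponent a x n * t))
      (2 ^ r * cexp (x * t) / ∏ j, (q ^ b j * cexp (a j * t) + 1)) := by
  have hgeom : ∀ j, HasSum (fun m => (-(q ^ b j * cexp (a j * t))) ^ m)
      (q ^ b j * cexp (a j * t) + 1)⁻¹ := fun j => by
    simpa [sub_neg_eq_add, add_comm] using
      hasSum_geometric_of_norm_lt_one ((norm_neg _).trans_lt (ht j))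
  have hnorm : ∀ j, Summable fun m => ‖(-(q ^ b j * cexp (a j * t))) ^ m‖ := fun j => by
    simpa using summable_geometric_of_lt_one (norm_nonneg _) (ht j)
  have h := (hasSum_prod_pi hgeom hnorm).mul_left (2 ^ r * cexp (x * t))
  simp only [← qEulerCoeff_mul_cexp, Finset.prod_inv_distrib, ← div_eq_mul_inv] at h
  exact h

theorem summable_norm_qEulerCoeff_mul_exp {R : ℝ} (hR : 0 ≤ R)
    (hq : ∀ j, ‖q ^ b j * cexp (a j * R)‖ < 1) :
    Summable fun n => ‖qEulerCoeff b q n‖ * Real.exp (‖qEulerExponent a x n‖ * R) := by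
  have hnorm : ∀ j, Summable fun m => ‖(-(q ^ b j * cexp (a j * R))) ^ m‖ := fun j => by
    simpa using summable_geometric_of_lt_one (norm_nonneg _) (hq j)
  refine ((summable_norm_prod_pi hnorm).mul_left ‖2 ^ r * cexp (|x| * R)‖).of_nonneg_of_le
    (fun n => by positivity) fun n => ?_
  have hexponent : ‖qEulerExponent a x n‖ ≤ ((∑ j, a j * n j : ℕ) : ℝ) + |x| := by
    refine (norm_add_le _ _).trans_eq ?_
    rw [Complex.norm_natCast, Complex.norm_real, Real.norm_eq_abs]
  calc ‖qEulerCoeff b q n‖ * Real.exp (‖qEulerExponent a x n‖ * R)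
      ≤ ‖qEulerCoeff b q n‖ * Real.exp ((((∑ j, a j * n j : ℕ) : ℝ) + |x|) * R) := by
        gcongr
    _ = ‖qEulerCoeff b q n * cexp (qEulerExponent a |x| n * R)‖ := by
        rw [norm_mul, Complex.norm_exp]
        simp [qEulerExponent]
    _ = ‖2 ^ r * cexp (|x| * R)‖ * ‖∏ j, (-(q ^ b j * cexp (a j * R))) ^ n j‖ := by
        rw [qEulerCoeff_mul_cexp, norm_mul]

theorem eventually_norm_pow_mul_cexp_lt_one (hb : ∀ j, 0 < b j) (hq : ‖q‖ < 1) :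
    ∀ᶠ t in 𝓝 (0 : ℂ), ∀ j, ‖q ^ b j * cexp (a j * t)‖ < 1 := by
  refine Filter.eventually_all.2 fun j => ?_
  have hcont : Continuous fun t : ℂ => ‖q ^ b j * cexp (a j * t)‖ := by fun_prop
  have h0 : ‖q ^ b j * cexp (a j * 0)‖ < 1 := by
    simpa using pow_lt_one₀ (norm_nonneg q) hq (hb j).ne'
  exact hcont.continuousAt.eventually_lt continuousAt_const h0

end QEuler

theorem changhee_qEuler_polynomial_series_general
    (r : ℕ) (a b : Fin r → ℕ)
    (hb : ∀ j, 0 < b j)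
    (q : ℂ) (hq1 : ‖q‖ < 1)
    (x : ℝ) (k : ℕ) :
    HasSum
      (fun n : Fin r → ℕ =>
        (2 : ℂ) ^ r * (-1) ^ (∑ j, n j) * q ^ (∑ j, b j * n j) *
          (((∑ j, a j * n j : ℕ) : ℂ) + (x : ℂ)) ^ k)
      (iteratedDeriv k
        (fun t : ℂ =>
          (2 : ℂ) ^ r * Complex.exp ((x : ℂ) * t) /
            ∏ j, (q ^ (b j) * Complex.exp ((a j : ℂ) * t) + 1)) 0) := by
  obtain ⟨ε, hε, hball⟩ :=
    Metric.eventually_nhds_iff.1 (eventually_norm_pow_mul_cexp_lt_one a b q hb hq1)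
  have hseries : (fun t : ℂ => (2 : ℂ) ^ r * cexp (x * t) / ∏ j, (q ^ b j * cexp (a j * t) + 1))
      =ᶠ[𝓝 0] fun t => ∑' n, qEulerCoeff b q n * cexp (qEulerExponent a x n * t) := by
    filter_upwards [Metric.ball_mem_nhds 0 hε] with t ht
    exact (hasSum_qEulerCoeff_mul_cexp a b q x (hball ht)).tsum_eq.symm
  have hsummable := summable_norm_qEulerCoeff_mul_exp a b q x (half_pos hε).le
    (hball (by simpa [abs_of_pos hε] using half_lt_self hε))
  have h := hasSum_iteratedDeriv_tsum_mul_cexp hsummable k (t := 0) (by simpa using half_pos hε)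
  simp only [mul_zero, Complex.exp_zero, mul_one] at h
  rw [hseries.iteratedDeriv_eq]
  exact h

/-- For `0 < |q| < 1`, `x ≥ 0` and `k` a positive odd integer, the `k`-th
iterated derivative at `t = 0` of `t ↦ 2^r e^{xt} / ∏_j (q^{b_j} e^{a_j t} + 1)` equals
the absolutely convergent sum `2^r Σ_{n ∈ ℕ^r} (-1)^{Σ n_j} q^{Σ b_j n_j} (Σ a_j n_j + x)^k`. -/
theorem changhee_qEuler_polynomial_series
    (r : ℕ) (hr : 0 < r) (a b : Fin r → ℕ)
    (ha : ∀ j, 0 < a j) (hb : ∀ j, 0 < b j)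
    (q : ℂ) (hq0 : 0 < ‖q‖) (hq1 : ‖q‖ < 1)
    (x : ℝ) (hx : 0 ≤ x) (k : ℕ) (hk : 0 < k) (hkodd : Odd k) :
    HasSum
      (fun n : Fin r → ℕ =>
        (2 : ℂ) ^ r * (-1) ^ (∑ j, n j) * q ^ (∑ j, b j * n j) *
          (((∑ j, a j * n j : ℕ) : ℂ) + (x : ℂ)) ^ k)
      (iteratedDeriv k
        (fun t : ℂ =>
          (2 : ℂ) ^ r * Complex.exp ((x : ℂ) * t) /
            ∏ j, (q ^ (b j) * Complex.exp ((a j : ℂ) * t) + 1)) 0) :=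
  changhee_qEuler_polynomial_series_general r a b hb q hq1 x k
end

section
/- Let r be a positive integer, a_1,…,a_r and b_1,…,b_r positive integers, q ∈ ℂ with 0 < |q| < 1, and x ∈ ℝ with x > 0. Then the function s ↦ ζ_r(s, x | a_1,…,a_r; b_1,…,b_r) = 2^r Σ_{n_1,…,n_r=0}^∞ (-1)^{n_1+⋯+n_r} q^{b_1 n_1+⋯+b_r n_r} (x + a_1 n_1 + ⋯ + a_r n_r)^{-s} is complex-differentiable at every point of ℂ (an entire function of s). -/
/-!
On the strip `|Re w| < m` the `n`-th term has modulus at most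
`(x⁻ᵐ + (x + ∑ a_j) ^ m) * ∏ (n_j + 1) ^ m ‖q‖ ^ n_j`, because `‖q‖ ^ (∑ b_j n_j) ≤ ‖q‖ ^ (∑ n_j)`
and `x ≤ x + ∑ a_j n_j ≤ (x + ∑ a_j) * ∏ (n_j + 1)`. The majorant factors over the coordinates into
polynomial-times-geometric series, so the series converges normally on the strip and its sum is
holomorphic there by Weierstrass' theorem.
-/

open Finset

theorem summable_pi_fin_prod_of_nonneg {α : Type*} (r : ℕ) {f : Fin r → α → ℝ}
    (hf0 : ∀ j k, 0 ≤ f j k) (hf : ∀ j, Summable (f j)) :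
    Summable fun n : Fin r → α => ∏ j, f j (n j) := by
  induction r with
  | zero => exact Summable.of_finite
  | succ r ih =>
    have hsplit := (hf 0).mul_of_nonneg (ih (f := fun j => f j.succ) (fun j => hf0 j.succ)
      fun j => hf j.succ) (fun k => hf0 0 k) fun n => prod_nonneg fun j _ => hf0 j.succ (n j)
    refine (Fin.consEquiv fun _ => α).summable_iff.mp ?_
    simpa [Function.comp_def, Fin.prod_univ_succ] using hsplit

theorem summable_add_one_pow_mul_geometric {Q : ℝ} (hQ0 : 0 ≤ Q) (hQ1 : Q < 1) (m : ℕ) :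
    Summable fun k : ℕ => ((k : ℝ) + 1) ^ m * Q ^ k := by
  have hpoly : Summable fun k : ℕ => (k : ℝ) ^ m * Q ^ k :=
    summable_pow_mul_geometric_of_norm_lt_one m (by rwa [Real.norm_of_nonneg hQ0])
  refine Summable.of_nonneg_of_le (fun k => by positivity) (fun k => ?_)
    ((hpoly.add (summable_geometric_of_lt_one hQ0 hQ1)).mul_left (2 ^ (m - 1)))
  calc ((k : ℝ) + 1) ^ m * Q ^ k ≤ 2 ^ (m - 1) * ((k : ℝ) ^ m + 1 ^ m) * Q ^ k := by
        gcongr; exact add_pow_le (Nat.cast_nonneg k) zero_le_one m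
    _ = 2 ^ (m - 1) * ((k : ℝ) ^ m * Q ^ k + Q ^ k) := by ring

theorem sum_mul_le_sum_mul_prod_add_one {ι : Type*} (s : Finset ι) (a n : ι → ℕ) :
    ∑ j ∈ s, a j * n j ≤ (∑ j ∈ s, a j) * ∏ j ∈ s, (n j + 1) := by
  rw [sum_mul]
  refine sum_le_sum fun j hj => Nat.mul_le_mul_left _ ?_
  exact (Nat.le_succ _).trans (single_le_prod' (fun i _ => Nat.le_add_left 1 (n i)) hj)

theorem Real.rpow_le_inv_pow_add_pow {z t : ℝ} {m : ℕ} (hz : 0 < z) (ht : |t| ≤ m) :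
    z ^ t ≤ (z ^ m)⁻¹ + z ^ m := by
  obtain ⟨hmt, htm⟩ := abs_le.mp ht
  rcases le_or_gt 1 z with h1z | hz1
  · have : z ^ t ≤ z ^ m := by
      simpa using Real.rpow_le_rpow_of_exponent_le h1z htm
    linarith [inv_nonneg.mpr (pow_nonneg hz.le m)]
  · have : z ^ t ≤ (z ^ m)⁻¹ := by
      simpa [Real.rpow_neg hz.le] using Real.rpow_le_rpow_of_exponent_ge hz hz1.le hmt
    linarith [pow_nonneg hz.le m]

theorem Real.rpow_le_of_le_of_le_mul {x z c P t : ℝ} {m : ℕ} (hx : 0 < x) (hxz : x ≤ z)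
    (hzc : z ≤ c * P) (hP : 1 ≤ P) (ht : |t| ≤ m) :
    z ^ t ≤ ((x ^ m)⁻¹ + c ^ m) * P ^ m := by
  have hz : 0 < z := hx.trans_le hxz
  have hP_pow : 1 ≤ P ^ m := one_le_pow₀ hP
  have hsmall : (z ^ m)⁻¹ ≤ (x ^ m)⁻¹ * P ^ m := by
    calc (z ^ m)⁻¹ ≤ (x ^ m)⁻¹ := by gcongr
      _ ≤ (x ^ m)⁻¹ * P ^ m := le_mul_of_one_le_right (by positivity) hP_pow
  have hlarge : z ^ m ≤ c ^ m * P ^ m := by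
    rw [← mul_pow]; exact pow_le_pow_left₀ hz.le hzc m
  calc z ^ t ≤ (z ^ m)⁻¹ + z ^ m := Real.rpow_le_inv_pow_add_pow hz ht
    _ ≤ ((x ^ m)⁻¹ + c ^ m) * P ^ m := by linarith

noncomputable def qZetaTerm {r : ℕ} (a b : Fin r → ℕ) (q : ℂ) (x : ℝ) (n : Fin r → ℕ) (s : ℂ) :
    ℂ :=
  (-1 : ℂ) ^ (∑ j, n j) * q ^ (∑ j, b j * n j) * (((x + (∑ j, a j * n j : ℕ) : ℝ) : ℂ)) ^ (-s)

section qZetaTerm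

variable {r : ℕ} {a b : Fin r → ℕ} {q : ℂ} {x : ℝ} {n : Fin r → ℕ}

theorem differentiable_qZetaTerm (hx : 0 < x) : Differentiable ℂ (qZetaTerm a b q x n) := by
  have hz : (((x + (∑ j, a j * n j : ℕ) : ℝ)) : ℂ) ≠ 0 := by norm_cast; positivity
  exact (differentiable_id.neg.const_cpow (Or.inl hz)).const_mul _

theorem norm_qZetaTerm_le (hb : ∀ j, 0 < b j) (hq : ‖q‖ ≤ 1) (hx : 0 < x) {m : ℕ} {w : ℂ}
    (hw : |w.re| ≤ m) :
    ‖qZetaTerm a b q x n w‖ ≤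
      ((x ^ m)⁻¹ + (x + ∑ j, (a j : ℝ)) ^ m) * ∏ j, (((n j : ℝ) + 1) ^ m * ‖q‖ ^ n j) := by
  set z : ℝ := x + (∑ j, a j * n j : ℕ)
  set P : ℕ := ∏ j, (n j + 1) with hP_def
  have hnorm : ‖qZetaTerm a b q x n w‖ = ‖q‖ ^ (∑ j, b j * n j) * z ^ (-w.re) := by
    rw [qZetaTerm, norm_mul, norm_mul, norm_pow, norm_pow, norm_neg, norm_one, one_pow, one_mul,
      Complex.norm_cpow_eq_rpow_re_of_pos (by positivity), Complex.neg_re]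
  have hq_pow : ‖q‖ ^ (∑ j, b j * n j) ≤ ‖q‖ ^ (∑ j, n j) :=
    pow_le_pow_of_le_one (norm_nonneg q) hq
      (sum_le_sum fun j _ => Nat.le_mul_of_pos_left _ (hb j))
  have hP : (1 : ℝ) ≤ P := by exact_mod_cast Nat.one_le_iff_ne_zero.mpr (by positivity)
  have hzP : z ≤ (x + ∑ j, (a j : ℝ)) * P := by
    have hsum : ((∑ j, a j * n j : ℕ) : ℝ) ≤ (∑ j, (a j : ℝ)) * P := by
      exact_mod_cast sum_mul_le_sum_mul_prod_add_one univ a n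
    nlinarith
  have hz_pow : z ^ (-w.re) ≤ ((x ^ m)⁻¹ + (x + ∑ j, (a j : ℝ)) ^ m) * (P : ℝ) ^ m :=
    Real.rpow_le_of_le_of_le_mul hx (le_add_of_nonneg_right (Nat.cast_nonneg _)) hzP
      hP (by rwa [abs_neg])
  have hprod : ∏ j, (((n j : ℝ) + 1) ^ m * ‖q‖ ^ n j) = (P : ℝ) ^ m * ‖q‖ ^ (∑ j, n j) := by
    rw [prod_mul_distrib, prod_pow, prod_pow_eq_pow_sum, hP_def]
    push_cast
    rfl
  rw [hnorm, hprod, mul_comm, ← mul_assoc]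
  gcongr

end qZetaTerm

theorem changhee_qZeta_entire_general
    (r : ℕ) (a b : Fin r → ℕ)
    (hb : ∀ j, 0 < b j)
    (q : ℂ) (hq1 : ‖q‖ < 1)
    (x : ℝ) (hx : 0 < x) (s : ℂ) :
    DifferentiableAt ℂ
      (fun s : ℂ =>
        (2 : ℂ) ^ r * ∑' n : Fin r → ℕ,
          (-1 : ℂ) ^ (∑ j, n j) * q ^ (∑ j, b j * n j) *
            (((x + (∑ j, a j * n j : ℕ) : ℝ) : ℂ)) ^ (-s)) s := by
  obtain ⟨m, hm⟩ := exists_nat_gt |s.re|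
  set U : Set ℂ := {w | |w.re| < m}
  have hU : IsOpen U := isOpen_lt Complex.continuous_re.abs continuous_const
  have hmajorant : Summable fun n : Fin r → ℕ =>
      ((x ^ m)⁻¹ + (x + ∑ j, (a j : ℝ)) ^ m) * ∏ j, (((n j : ℝ) + 1) ^ m * ‖q‖ ^ n j) :=
    (summable_pi_fin_prod_of_nonneg r (fun _ _ => by positivity) fun _ =>
      summable_add_one_pow_mul_geometric (norm_nonneg q) hq1 m).mul_left _
  have hzeta : DifferentiableOn ℂ (fun w => ∑' n, qZetaTerm a b q x n w) U :=
    Complex.differentiableOn_tsum_of_summable_norm hmajorant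
      (fun _ => (differentiable_qZetaTerm hx).differentiableOn) hU
      fun _ _ hw => norm_qZetaTerm_le hb hq1.le hx hw.le
  exact (hzeta.differentiableAt (hU.mem_nhds hm)).const_mul _

/-- For `0 < |q| < 1` and real `x > 0`, the multivariate Hurwitz-type
`q`-zeta function `s ↦ 2^r Σ_{n⃗ ∈ ℕ^r} (-1)^{Σ n_j} q^{Σ b_j n_j} (x + Σ a_j n_j)^{-s}`
is complex-differentiable at every point of `ℂ` (an entire function of `s`). -/
theorem changhee_qZeta_entire
    (r : ℕ) (hr : 0 < r) (a b : Fin r → ℕ)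
    (ha : ∀ j, 0 < a j) (hb : ∀ j, 0 < b j)
    (q : ℂ) (hq0 : 0 < ‖q‖) (hq1 : ‖q‖ < 1)
    (x : ℝ) (hx : 0 < x) (s : ℂ) :
    DifferentiableAt ℂ
      (fun s : ℂ =>
        (2 : ℂ) ^ r * ∑' n : Fin r → ℕ,
          (-1 : ℂ) ^ (∑ j, n j) * q ^ (∑ j, b j * n j) *
            (((x + (∑ j, a j * n j : ℕ) : ℝ) : ℂ)) ^ (-s)) s :=
  changhee_qZeta_entire_general r a b hb q hq1 x hx s
end

section
/- Let r be a positive integer, a_1,…,a_r and b_1,…,b_r positive integers, q ∈ ℂ with 0 < |q| < 1, f an odd positive integer, χ a Dirichlet character modulo f, and n a positive odd integer. Then 2^r Σ_{m_1,…,m_r=0}^∞ (-1)^{m_1+⋯+m_r} q^{b_1 m_1+⋯+b_r m_r} χ(m_1)⋯χ(m_r) (a_1 m_1+⋯+a_r m_r)^n = f^n Σ_{n_1,…,n_r=0}^{f-1} (-1)^{n_1+⋯+n_r} χ(n_1)⋯χ(n_r) q^{b_1 n_1+⋯+b_r n_r} · [ 2^r Σ_{x_1,…,x_r=0}^∞ (-1)^{x_1+⋯+x_r}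 (q^f)^{b_1 x_1+⋯+b_r x_r} ((a_1 n_1+⋯+a_r n_r)/f + a_1 x_1+⋯+a_r x_r)^n ], where all infinite sums run over tuples in ℕ^r and converge absolutely (this is the distribution relation E_{n,χ,q}^{(r)} = f^n Σ_{n⃗} (-1)^{Σ n_j} ∏ χ(n_j) q^{Σ b_j n_j} E_{n,q^f}^{(r)}((Σ a_j n_j)/f | a_1,…,a_r; b_1,…,b_r)). -/
/-! Write each index as `m_j = c_j + f x_j` with `0 ≤ c_j < f`. Since `χ` has period `f` and `f`
is odd, `χ(m_j) = χ(c_j)`, `(-1)^{m_j} = (-1)^{c_j} (-1)^{x_j}`,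
`q^{b_j m_j} = q^{b_j c_j} (q^f)^{b_j x_j}` and `Σ a_j m_j = f (Σ a_j c_j / f + Σ a_j x_j)`,
so the residue class of `c` contributes `f^n` times the `q^f`-Euler polynomial series at
`Σ a_j c_j / f`. Regrouping is licensed by absolute convergence: with `ρ = ‖q‖`, the terms are
dominated by `C ∏_j (1 + m_j)^n ρ^{m_j}`. -/

open Finset

theorem summable_one_add_pow_mul_geometric (n : ℕ) {ρ : ℝ} (hρ0 : 0 ≤ ρ) (hρ1 : ρ < 1) :
    Summable fun k : ℕ => (1 + (k : ℝ)) ^ n * ρ ^ k := by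
  have hρ : ‖ρ‖ < 1 := by rwa [Real.norm_of_nonneg hρ0]
  refine (summable_sum (s := range (n + 1)) fun i _ =>
    (summable_pow_mul_geometric_of_norm_lt_one i hρ).mul_left (n.choose i : ℝ)).congr fun k => ?_
  simp only [add_comm (1 : ℝ), add_pow, one_pow, mul_one, sum_mul]
  exact sum_congr rfl fun i _ => by ring

theorem summable_pi_prod_of_nonneg {ι κ : Type*} [Fintype ι] {g : κ → ℝ} (hg0 : 0 ≤ g)
    (hg : Summable g) : Summable fun m : ι → κ => ∏ j, g (m j) := by
  classical
  refine summable_of_sum_le (c := (∑' k, g k) ^ Fintype.card ι)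
    (fun m => prod_nonneg fun j _ => hg0 _) fun u => ?_
  calc ∑ m ∈ u, ∏ j, g (m j)
      ≤ ∑ m ∈ Fintype.piFinset fun j => u.image (· j), ∏ j, g (m j) :=
        sum_le_sum_of_subset_of_nonneg (fun m hm => Fintype.mem_piFinset.2 fun j =>
          mem_image_of_mem _ hm) fun m _ _ => prod_nonneg fun j _ => hg0 _
    _ = ∏ j, ∑ k ∈ u.image (· j), g k := (prod_univ_sum _ _).symm
    _ ≤ ∏ _j : ι, ∑' k, g k :=
        prod_le_prod (fun j _ => sum_nonneg fun k _ => hg0 k)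
          fun j _ => hg.sum_le_tsum _ fun k _ => hg0 k
    _ = (∑' k, g k) ^ Fintype.card ι := prod_const _

theorem sum_mul_le_sum_mul_prod_one_add {ι : Type*} [Fintype ι] (a m : ι → ℕ) :
    ∑ j, a j * m j ≤ (∑ j, a j) * ∏ j, (1 + m j) := by
  rw [sum_mul]
  refine sum_le_sum fun j hj => Nat.mul_le_mul_left _ ?_
  calc m j ≤ 1 + m j := Nat.le_add_left _ _
    _ ≤ ∏ i, (1 + m i) := single_le_prod' (fun i _ => Nat.le_add_right _ _) hj

theorem summable_of_norm_le_geometric_mul_pow {ι E : Type*} [Fintype ι] [NormedAddCommGroup E]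
    [CompleteSpace E] (a b : ι → ℕ) (hb : ∀ j, 0 < b j) (n : ℕ) {ρ t : ℝ} (hρ0 : 0 ≤ ρ)
    (hρ1 : ρ < 1) (ht : 0 ≤ t) {F : (ι → ℕ) → E}
    (hF : ∀ m, ‖F m‖ ≤ ρ ^ (∑ j, b j * m j) * (t + ((∑ j, a j * m j : ℕ) : ℝ)) ^ n) :
    Summable F := by
  set C : ℝ := (t + ∑ j, (a j : ℝ)) ^ n
  have hdom : Summable fun m : ι → ℕ => C * ∏ j, ((1 + (m j : ℝ)) ^ n * ρ ^ m j) :=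
    (summable_pi_prod_of_nonneg (fun k => by positivity)
      (summable_one_add_pow_mul_geometric n hρ0 hρ1)).mul_left C
  refine hdom.of_norm_bounded fun m => (hF m).trans ?_
  have hprod : (1 : ℝ) ≤ ∏ j, (1 + (m j : ℝ)) := by
    exact_mod_cast Nat.one_le_iff_ne_zero.2 (prod_ne_zero_iff.2 fun j _ => by omega)
  have hlin : t + ((∑ j, a j * m j : ℕ) : ℝ) ≤ (t + ∑ j, (a j : ℝ)) * ∏ j, (1 + (m j : ℝ)) := by
    have := sum_mul_le_sum_mul_prod_one_add a m
    rw [add_mul]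
    gcongr
    · exact le_mul_of_one_le_right ht hprod
    · exact_mod_cast this
  have hgeom : ρ ^ (∑ j, b j * m j) ≤ ∏ j, ρ ^ m j := by
    rw [prod_pow_eq_pow_sum]
    exact pow_le_pow_of_le_one hρ0 hρ1.le (sum_le_sum fun j _ => Nat.le_mul_of_pos_left _ (hb j))
  calc ρ ^ (∑ j, b j * m j) * (t + ((∑ j, a j * m j : ℕ) : ℝ)) ^ n
      ≤ (∏ j, ρ ^ m j) * (C * (∏ j, (1 + (m j : ℝ))) ^ n) := by
        rw [← mul_pow]
        gcongr
    _ = C * ∏ j, ((1 + (m j : ℝ)) ^ n * ρ ^ m j) := by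
        rw [← prod_pow, prod_mul_distrib]
        ring

theorem sum_mul_add_mul {ι R : Type*} [Fintype ι] [CommSemiring R] (w u v : ι → R) (k : R) :
    ∑ j, w j * (u j + k * v j) = ∑ j, w j * u j + k * ∑ j, w j * v j := by
  rw [mul_sum, ← sum_add_distrib]
  exact sum_congr rfl fun j _ => by ring

def residueQuotientEquiv (ι : Type*) (f : ℕ) [NeZero f] : (ι → Fin f) × (ι → ℕ) ≃ (ι → ℕ) :=
  (Equiv.prodComm _ _).trans <| (Equiv.arrowProdEquivProdArrow ι _ _).symm.trans <|
    Equiv.piCongrRight fun _ => (Nat.divModEquiv f).symm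

theorem residueQuotientEquiv_apply {ι : Type*} {f : ℕ} [NeZero f] (c : ι → Fin f) (x : ι → ℕ) :
    residueQuotientEquiv ι f (c, x) = fun j => (c j : ℕ) + f * x j := by
  ext j
  simp [residueQuotientEquiv, Nat.divModEquiv, add_comm, mul_comm]

theorem tsum_eq_sum_tsum_residue_add_mul {ι E : Type*} [Fintype ι] [DecidableEq ι]
    [NormedAddCommGroup E] [CompleteSpace E] (f : ℕ) [NeZero f] {F : (ι → ℕ) → E}
    (hF : Summable F) :
    ∑' m, F m = ∑ c : ι → Fin f, ∑' x : ι → ℕ, F fun j => (c j : ℕ) + f * x j := by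
  have hsplit : Summable fun p => F (residueQuotientEquiv ι f p) :=
    (residueQuotientEquiv ι f).summable_iff.2 hF
  rw [← (residueQuotientEquiv ι f).tsum_eq, hsplit.tsum_prod, tsum_fintype]
  simp only [residueQuotientEquiv_apply]

section qEuler

variable {ι : Type*} [Fintype ι] {f : ℕ}

-- `2^r ∑' m, qEulerCharTerm n χ q a b m` is `E_{n,χ,q}^{(r)}(a; b)` and
-- `2^r ∑' x, qEulerPolyTerm n q y a b x` is `E_{n,q}^{(r)}(y | a; b)`.
noncomputable def qEulerCharTerm (n : ℕ) (χ : DirichletCharacter ℂ f) (q : ℂ) (a b m : ι → ℕ) : ℂ :=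
  (-1) ^ (∑ j, m j) * q ^ (∑ j, b j * m j) * (∏ j, χ (m j)) * ((∑ j, a j * m j : ℕ) : ℂ) ^ n

noncomputable def qEulerPolyTerm (n : ℕ) (q y : ℂ) (a b x : ι → ℕ) : ℂ :=
  (-1) ^ (∑ j, x j) * q ^ (∑ j, b j * x j) * (y + ((∑ j, a j * x j : ℕ) : ℂ)) ^ n

theorem summable_qEulerCharTerm (n : ℕ) (χ : DirichletCharacter ℂ f) {q : ℂ} (hq : ‖q‖ < 1)
    (a : ι → ℕ) {b : ι → ℕ} (hb : ∀ j, 0 < b j) : Summable (qEulerCharTerm n χ q a b) := by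
  refine summable_of_norm_le_geometric_mul_pow a b hb n (norm_nonneg q) hq le_rfl fun m => ?_
  have hχ : ‖∏ j, χ (m j)‖ ≤ 1 := by
    rw [norm_prod]
    exact prod_le_one (fun j _ => norm_nonneg _) fun j _ => χ.norm_le_one _
  simp only [qEulerCharTerm, norm_mul, norm_pow, norm_neg, norm_one, one_pow, one_mul,
    Complex.norm_natCast, zero_add]
  exact mul_le_mul_of_nonneg_right (mul_le_of_le_one_right (by positivity) hχ) (by positivity)

theorem summable_qEulerPolyTerm (n : ℕ) {q : ℂ} (hq : ‖q‖ < 1) (y : ℂ) (a : ι → ℕ)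
    {b : ι → ℕ} (hb : ∀ j, 0 < b j) : Summable (qEulerPolyTerm n q y a b) := by
  refine summable_of_norm_le_geometric_mul_pow a b hb n (norm_nonneg q) hq (norm_nonneg y)
    fun x => ?_
  simp only [qEulerPolyTerm, norm_mul, norm_pow, norm_neg, norm_one, one_pow, one_mul]
  gcongr
  exact (norm_add_le _ _).trans_eq (by rw [Complex.norm_natCast])

theorem qEulerCharTerm_residue_add_mul (n : ℕ) (χ : DirichletCharacter ℂ f) (q : ℂ)
    (a b : ι → ℕ) (hf : Odd f) (c : ι → Fin f) (x : ι → ℕ) :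
    qEulerCharTerm n χ q a b (fun j => c j + f * x j) =
      (f : ℂ) ^ n * ((-1) ^ (∑ j, (c j : ℕ)) * (∏ j, χ ((c j : ℕ) : ZMod f)) *
          q ^ (∑ j, b j * (c j : ℕ))) *
        qEulerPolyTerm n (q ^ f) (((∑ j, a j * (c j : ℕ) : ℕ) : ℂ) / f) a b x := by
  have hf0 : (f : ℂ) ≠ 0 := Nat.cast_ne_zero.2 hf.pos.ne'
  have hsign : (-1 : ℂ) ^ (∑ j, ((c j : ℕ) + f * x j)) =
      (-1) ^ (∑ j, (c j : ℕ)) * (-1) ^ (∑ j, x j) := by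
    rw [sum_add_distrib, ← mul_sum, pow_add, pow_mul, hf.neg_one_pow]
  have hχ : ∀ j, χ (((c j : ℕ) + f * x j : ℕ) : ZMod f) = χ ((c j : ℕ) : ZMod f) := fun j => by
    simp
  have hlin : (((∑ j, a j * (c j : ℕ)) + f * ∑ j, a j * x j : ℕ) : ℂ) =
      f * (((∑ j, a j * (c j : ℕ) : ℕ) : ℂ) / f + ((∑ j, a j * x j : ℕ) : ℂ)) := by
    push_cast
    field_simp
  simp only [qEulerCharTerm, qEulerPolyTerm, hsign, hχ, sum_mul_add_mul, pow_add, pow_mul, hlin,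
    mul_pow]
  ring

end qEuler

theorem changhee_qEuler_distribution_relation_general
    (r : ℕ) (a b : Fin r → ℕ)
    (hb : ∀ j, 0 < b j)
    (q : ℂ) (hq1 : ‖q‖ < 1)
    (f : ℕ) (hfodd : Odd f)
    (χ : DirichletCharacter ℂ f)
    (n : ℕ) :
    Summable
        (fun m : Fin r → ℕ =>
          (-1 : ℂ) ^ (∑ j, m j) * q ^ (∑ j, b j * m j) * (∏ j, χ (m j)) *
            ((∑ j, a j * m j : ℕ) : ℂ) ^ n)
      ∧ (∀ c : Fin r → Fin f,
          Summable
            (fun y : Fin r → ℕ =>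
              (-1 : ℂ) ^ (∑ j, y j) * (q ^ f) ^ (∑ j, b j * y j) *
                (((∑ j, a j * (c j : ℕ) : ℕ) : ℂ) / (f : ℂ) +
                  ((∑ j, a j * y j : ℕ) : ℂ)) ^ n))
      ∧ (2 : ℂ) ^ r * (∑' m : Fin r → ℕ,
            (-1 : ℂ) ^ (∑ j, m j) * q ^ (∑ j, b j * m j) * (∏ j, χ (m j)) *
              ((∑ j, a j * m j : ℕ) : ℂ) ^ n)
          = (f : ℂ) ^ n * ∑ c : Fin r → Fin f,
              (-1 : ℂ) ^ (∑ j, (c j : ℕ)) * (∏ j, χ ((c j : ℕ) : ZMod f)) *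
                q ^ (∑ j, b j * (c j : ℕ)) *
                ((2 : ℂ) ^ r * ∑' y : Fin r → ℕ,
                  (-1 : ℂ) ^ (∑ j, y j) * (q ^ f) ^ (∑ j, b j * y j) *
                    (((∑ j, a j * (c j : ℕ) : ℕ) : ℂ) / (f : ℂ) +
                      ((∑ j, a j * y j : ℕ) : ℂ)) ^ n) := by
  have : NeZero f := ⟨hfodd.pos.ne'⟩
  have hqf : ‖q ^ f‖ < 1 := by
    rw [norm_pow]
    exact pow_lt_one₀ (norm_nonneg q) hq1 hfodd.pos.ne'
  have hchar := summable_qEulerCharTerm n χ hq1 a hb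
  refine ⟨hchar, fun c => summable_qEulerPolyTerm n hqf _ a hb, ?_⟩
  change (2 : ℂ) ^ r * ∑' m, qEulerCharTerm n χ q a b m = (f : ℂ) ^ n * ∑ c : Fin r → Fin f,
    _ * ((2 : ℂ) ^ r * ∑' x, qEulerPolyTerm n (q ^ f) _ a b x)
  simp only [tsum_eq_sum_tsum_residue_add_mul f hchar,
    qEulerCharTerm_residue_add_mul n χ q a b hfodd, tsum_mul_left, mul_sum]
  exact sum_congr rfl fun c _ => by ring

/-- Distribution relation for the multivariate generalized `q`-Euler
numbers attached to a Dirichlet character `χ` mod `f` (`f` odd), for `n` a positive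
odd integer:
`E_{n,χ,q}^{(r)} = f^n Σ_{n⃗ ∈ {0,…,f-1}^r} (-1)^{Σ n_j} ∏_j χ(n_j) q^{Σ b_j n_j} ·
  E_{n,q^f}^{(r)}((Σ a_j n_j)/f)`,
where both sides are given by absolutely convergent multivariate series. -/
theorem changhee_qEuler_distribution_relation
    (r : ℕ) (hr : 0 < r) (a b : Fin r → ℕ)
    (ha : ∀ j, 0 < a j) (hb : ∀ j, 0 < b j)
    (q : ℂ) (hq0 : 0 < ‖q‖) (hq1 : ‖q‖ < 1)
    (f : ℕ) (hf : 0 < f) (hfodd : Odd f)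
    (χ : DirichletCharacter ℂ f)
    (n : ℕ) (hn : 0 < n) (hnodd : Odd n) :
    Summable
        (fun m : Fin r → ℕ =>
          (-1 : ℂ) ^ (∑ j, m j) * q ^ (∑ j, b j * m j) * (∏ j, χ (m j)) *
            ((∑ j, a j * m j : ℕ) : ℂ) ^ n)
      ∧ (∀ c : Fin r → Fin f,
          Summable
            (fun y : Fin r → ℕ =>
              (-1 : ℂ) ^ (∑ j, y j) * (q ^ f) ^ (∑ j, b j * y j) *
                (((∑ j, a j * (c j : ℕ) : ℕ) : ℂ) / (f : ℂ) +
                  ((∑ j, a j * y j : ℕ) : ℂ)) ^ n))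
      ∧ (2 : ℂ) ^ r * (∑' m : Fin r → ℕ,
            (-1 : ℂ) ^ (∑ j, m j) * q ^ (∑ j, b j * m j) * (∏ j, χ (m j)) *
              ((∑ j, a j * m j : ℕ) : ℂ) ^ n)
          = (f : ℂ) ^ n * ∑ c : Fin r → Fin f,
              (-1 : ℂ) ^ (∑ j, (c j : ℕ)) * (∏ j, χ ((c j : ℕ) : ZMod f)) *
                q ^ (∑ j, b j * (c j : ℕ)) *
                ((2 : ℂ) ^ r * ∑' y : Fin r → ℕ,
                  (-1 : ℂ) ^ (∑ j, y j) * (q ^ f) ^ (∑ j, b j * y j) *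
                    (((∑ j, a j * (c j : ℕ) : ℕ) : ℂ) / (f : ℂ) +
                      ((∑ j, a j * y j : ℕ) : ℂ)) ^ n) :=
  changhee_qEuler_distribution_relation_general r a b hb q hq1 f hfodd χ n
end

section
/- Let p be an odd prime, q a p-adic integer with |q − 1|_p < 1, x a p-adic integer, and n a natural number. Then the sequence N ↦ Σ_{y=0}^{p^N − 1} (-1)^y q^y (x + y)^n converges in ℤ_p as N → ∞; i.e., there exists L ∈ ℤ_p such that the partial sums Σ_{y=0}^{p^N − 1} (-1)^y q^y (x + y)^n tend to L (this limit is the p-adic fermionic q-integral defining the q-Euler polynomial E_{n,q}(x) = ∫_{ℤ_p} q^y (x+y)^n dμ_{−1}(y)). -/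
/-!
Write `S N` for the `N`-th partial sum and `g y = q ^ y * (x + y) ^ n`. Since `p ∣ q - 1`, we have
`p ^ (N + 1) ∣ q ^ p ^ N - 1`, so `g` is `p ^ N`-periodic modulo `p ^ N`. Splitting the range of
`S (N + 1)` into `p` blocks of length `p ^ N`, the signs factor because `p ^ N` is odd, and the block
signs sum to `1` because `p` is odd; hence `p ^ N ∣ S (N + 1) - S N`. The partial sums therefore
form a Cauchy sequence in `ℤ_[p]`.
-/

open Filter Finset Topology

theorem Finset.sum_range_mul_eq_sum_sum {M : Type*} [AddCommMonoid M] (f : ℕ → M) (m n : ℕ) :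
    ∑ y ∈ range (m * n), f y = ∑ j ∈ range m, ∑ i ∈ range n, f (j * n + i) := by
  induction m with
  | zero => simp
  | succ m ih => rw [Nat.succ_mul, sum_range_add, ih, sum_range_succ]

theorem dvd_alternating_sum_range_mul_sub {R : Type*} [CommRing R] {g : ℕ → R} {m M : ℕ}
    {d : R} (hm : Odd m) (hM : Odd M) (hg : ∀ j i, d ∣ g (j * M + i) - g i) :
    d ∣ ∑ y ∈ range (m * M), (-1) ^ y * g y - ∑ y ∈ range M, (-1) ^ y * g y := by
  have hsign : ∀ j i, (-1 : R) ^ (j * M + i) = (-1) ^ j * (-1) ^ i := fun j i => by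
    rw [pow_add, mul_comm j, pow_mul, hM.neg_one_pow]
  have hblocks : ∑ j ∈ range m, (-1 : R) ^ j = 1 := by
    rw [neg_one_geom_sum, if_neg (Nat.not_even_iff_odd.mpr hm)]
  have hdiff : ∑ y ∈ range (m * M), (-1) ^ y * g y - ∑ y ∈ range M, (-1) ^ y * g y
      = ∑ j ∈ range m, ∑ i ∈ range M, (-1) ^ j * (-1) ^ i * (g (j * M + i) - g i) := by
    have hshort : ∑ y ∈ range M, (-1) ^ y * g y
        = ∑ j ∈ range m, ∑ i ∈ range M, (-1) ^ j * ((-1) ^ i * g i) := by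
      rw [← sum_mul_sum, hblocks, one_mul]
    rw [hshort, sum_range_mul_eq_sum_sum, ← sum_sub_distrib]
    refine sum_congr rfl fun j _ => ?_
    rw [← sum_sub_distrib]
    refine sum_congr rfl fun i _ => ?_
    rw [hsign]
    ring
  rw [hdiff]
  exact dvd_sum fun j _ => dvd_sum fun i _ => dvd_mul_of_dvd_right (hg j i) _

theorem pow_dvd_pow_mul_sub_one {R : Type*} [CommRing R] {p : ℕ} {q : R} (hq : (p : R) ∣ q - 1)
    (N j : ℕ) : (p : R) ^ N ∣ q ^ (j * p ^ N) - 1 := by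
  have h : (p : R) ^ (N + 1) ∣ q ^ p ^ N - 1 := by
    simpa using dvd_sub_pow_of_dvd_sub hq N
  rw [mul_comm, pow_mul]
  exact (pow_dvd_pow _ N.le_succ).trans (h.trans (sub_one_dvd_pow_sub_one _ j))

theorem pow_dvd_shift_sub_of_dvd_sub_one {R : Type*} [CommRing R] {p : ℕ} {q : R}
    (hq : (p : R) ∣ q - 1) (x : R) (n N j i : ℕ) :
    (p : R) ^ N ∣ q ^ (j * p ^ N + i) * (x + ((j * p ^ N + i : ℕ) : R)) ^ n
      - q ^ i * (x + (i : R)) ^ n := by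
  set X := x + (i : R)
  set Y := x + ((j * p ^ N + i : ℕ) : R)
  have hYX : (p : R) ^ N ∣ Y - X := ⟨j, by simp only [X, Y]; push_cast; ring⟩
  have hsplit : q ^ (j * p ^ N + i) * Y ^ n - q ^ i * X ^ n
      = q ^ i * ((q ^ (j * p ^ N) - 1) * Y ^ n + (Y ^ n - X ^ n)) := by
    rw [pow_add]; ring
  rw [hsplit]
  exact dvd_mul_of_dvd_right (dvd_add (dvd_mul_of_dvd_left (pow_dvd_pow_mul_sub_one hq N j) _)
    (hYX.trans (sub_dvd_pow_sub_pow Y X n))) _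

theorem PadicInt.exists_tendsto_of_pow_dvd_sub_succ {p : ℕ} [Fact p.Prime] (s : ℕ → ℤ_[p])
    (hs : ∀ N, (p : ℤ_[p]) ^ N ∣ s (N + 1) - s N) : ∃ L, Tendsto s atTop (𝓝 L) := by
  have hp : (1 : ℝ) < p := mod_cast (Fact.out : p.Prime).one_lt
  refine cauchySeq_tendsto_of_complete (cauchySeq_of_le_geometric (p : ℝ)⁻¹ 1
    (inv_lt_one_of_one_lt₀ hp) fun N => ?_)
  have h : ‖s N - s (N + 1)‖ ≤ (p : ℝ) ^ (-N : ℤ) := by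
    rw [norm_le_pow_iff_mem_span_pow, Ideal.mem_span_singleton, dvd_sub_comm]
    exact hs N
  simpa [dist_eq_norm] using h

/-- Let `p` be an odd prime, `q ∈ ℤ_p` with `|q - 1|_p < 1`, `x ∈ ℤ_p`
and `n ∈ ℕ`. Then the sequence `N ↦ Σ_{y=0}^{p^N - 1} (-1)^y q^y (x + y)^n` converges
in `ℤ_p`; its limit is the fermionic `p`-adic `q`-integral defining `E_{n,q}(x)`. -/
theorem changhee_fermionic_integral_exists
    (p : ℕ) [Fact p.Prime] (hpodd : Odd p)
    (q : ℤ_[p]) (hq : ‖q - 1‖ < 1)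
    (x : ℤ_[p]) (n : ℕ) :
    ∃ L : ℤ_[p],
      Filter.Tendsto
        (fun N : ℕ =>
          ∑ y ∈ Finset.range (p ^ N),
            (-1 : ℤ_[p]) ^ y * q ^ y * (x + (y : ℤ_[p])) ^ n)
        Filter.atTop (nhds L) := by
  have hqd : (p : ℤ_[p]) ∣ q - 1 := (PadicInt.norm_lt_one_iff_dvd _).mp hq
  refine PadicInt.exists_tendsto_of_pow_dvd_sub_succ _ fun N => ?_
  simp only [mul_assoc]
  rw [pow_succ']
  exact dvd_alternating_sum_range_mul_sub hpodd hpodd.pow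
    fun j i => pow_dvd_shift_sub_of_dvd_sub_one hqd x n N j i
end

section
/- Let p be an odd prime, r a positive integer, a_1,…,a_r and b_1,…,b_r positive integers, q a p-adic integer with |q − 1|_p < 1, and n a natural number. Then the sequence N ↦ Σ_{x_1=0}^{p^N − 1} ⋯ Σ_{x_r=0}^{p^N − 1} (-1)^{x_1+⋯+x_r} q^{b_1 x_1+⋯+b_r x_r} (a_1 x_1+⋯+a_r x_r)^n converges in ℤ_p as N → ∞; i.e., there exists L ∈ ℤ_p such that these multiple partial sums tend to L (this limit is the multivariate p-adic fermionic q-integral defining the multivariate q-Euler number E_{n,q}^{(r)}(a_1,…,a_r; b_1,…,b_r)). -/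
/-!
Write each digit vector `x < p ^ (N + 1)` as `x = i + p ^ N t` with `i < p ^ N`, `t < p`. Since
`p` is odd, `∑_{t < p} (-1) ^ t = 1`, so the `N`-th partial sum can be spread over the `p ^ r`
blocks of the `(N + 1)`-st, and the difference of consecutive sums becomes a signed sum of
`g(i + p ^ N t) - g(i)`. For `g(x) = q ^ (b·x) (a·x) ^ n` each of these is divisible by `p ^ N`,
because `q ≡ 1 mod p` forces `q ^ (p ^ N) ≡ 1 mod p ^ (N + 1)`. By the ultrametric inequality
consecutive sums are `p ^ (-N)`-close, and completeness of `ℤ_p` gives the limit.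
-/

open Finset Filter Topology

section FermionicRiemannSum

variable {R : Type*} {m r : ℕ}

lemma sum_neg_one_pow_sum_eq_one [Ring R] (hm : Odd m) :
    ∑ t : Fin r → Fin m, (-1 : R) ^ (∑ j, (t j : ℕ)) = 1 := by
  have hdigit : ∑ x : Fin m, (-1 : ℤ) ^ (x : ℕ) = 1 := by
    rw [Fin.sum_univ_eq_sum_range (fun i => (-1 : ℤ) ^ i), neg_one_geom_sum,
      if_neg (Nat.not_even_iff_odd.mpr hm)]
  have hℤ : ∑ t : Fin r → Fin m, (-1 : ℤ) ^ (∑ j, (t j : ℕ)) = 1 := by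
    simp_rw [← prod_pow_eq_pow_sum]
    rw [← Fintype.prod_sum fun (_ : Fin r) (x : Fin m) => (-1 : ℤ) ^ (x : ℕ)]
    simp only [hdigit, prod_const_one]
  simpa using congrArg (Int.cast : ℤ → R) hℤ

lemma sum_fin_pow_succ_pi {M : Type*} [AddCommMonoid M] (N : ℕ) (f : (Fin r → ℕ) → M) :
    ∑ v : Fin r → Fin (m ^ (N + 1)), f (fun j => v j) =
      ∑ t : Fin r → Fin m, ∑ i : Fin r → Fin (m ^ N), f (fun j => i j + m ^ N * t j) := by
  let e : Fin m × Fin (m ^ N) ≃ Fin (m ^ (N + 1)) :=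
    finProdFinEquiv.trans (finCongr (pow_succ' m N).symm)
  let E : (Fin r → Fin m) × (Fin r → Fin (m ^ N)) ≃ (Fin r → Fin (m ^ (N + 1))) :=
    (Equiv.arrowProdEquivProdArrow _ _ _).symm.trans (Equiv.arrowCongr (Equiv.refl _) e)
  have hE : ∀ ti j, (E ti j : ℕ) = ti.2 j + m ^ N * ti.1 j := fun ti j => by
    simp [E, e, Equiv.arrowProdEquivProdArrow]
  rw [← Fintype.sum_prod_type']
  exact (Fintype.sum_equiv E _ _ fun ti => by simp only [hE]).symm

/-- The Riemann sums whose limit is the fermionic integral `∫ g dμ_{-1}` over `ℤ_m ^ r`. -/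
def fermionicRiemannSum [Ring R] (m r : ℕ) (g : (Fin r → ℕ) → R) (N : ℕ) : R :=
  ∑ v : Fin r → Fin (m ^ N), (-1 : R) ^ (∑ j, (v j : ℕ)) * g (fun j => v j)

lemma fermionicRiemannSum_succ_sub [Ring R] (hm : Odd m) (g : (Fin r → ℕ) → R) (N : ℕ) :
    fermionicRiemannSum m r g (N + 1) - fermionicRiemannSum m r g N =
      ∑ t : Fin r → Fin m, ∑ i : Fin r → Fin (m ^ N),
        (-1 : R) ^ (∑ j, (t j : ℕ)) * ((-1 : R) ^ (∑ j, (i j : ℕ)) *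
          (g (fun j => i j + m ^ N * t j) - g (fun j => i j))) := by
  have hsign : ∀ (t : Fin r → Fin m) (i : Fin r → Fin (m ^ N)),
      (-1 : R) ^ (∑ j, ((i j : ℕ) + m ^ N * t j)) =
        (-1 : R) ^ (∑ j, (t j : ℕ)) * (-1 : R) ^ (∑ j, (i j : ℕ)) := fun t i => by
    rw [sum_add_distrib, ← mul_sum, pow_add, pow_mul, hm.pow.neg_one_pow,
      ((Commute.neg_one_left (-1 : R)).pow_pow _ _).eq]
  have hspread : fermionicRiemannSum m r g N =
      ∑ t : Fin r → Fin m, (-1 : R) ^ (∑ j, (t j : ℕ)) * fermionicRiemannSum m r g N := by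
    rw [← sum_mul, sum_neg_one_pow_sum_eq_one hm, one_mul]
  have hsplit := sum_fin_pow_succ_pi (m := m) N fun x => (-1 : R) ^ (∑ j, x j) * g x
  rw [hspread, fermionicRiemannSum, fermionicRiemannSum, hsplit, ← sum_sub_distrib]
  refine sum_congr rfl fun t _ => ?_
  simp only [mul_sum, ← sum_sub_distrib, hsign, mul_sub, mul_assoc]

lemma norm_neg_one_pow_mul [NormedRing R] (k : ℕ) (x : R) : ‖(-1 : R) ^ k * x‖ = ‖x‖ := by
  rcases neg_one_pow_eq_or R k with h | h <;> simp [h]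

lemma norm_fermionicRiemannSum_succ_sub_le [NormedRing R] [IsUltrametricDist R] (hm : Odd m)
    {g : (Fin r → ℕ) → R} {N : ℕ} {ε : ℝ}
    (hg : ∀ x y : Fin r → ℕ, ‖g (fun j => x j + m ^ N * y j) - g x‖ ≤ ε) :
    ‖fermionicRiemannSum m r g (N + 1) - fermionicRiemannSum m r g N‖ ≤ ε := by
  have hε : 0 ≤ ε := (norm_nonneg _).trans (hg 0 0)
  rw [fermionicRiemannSum_succ_sub hm]
  refine IsUltrametricDist.norm_sum_le_of_forall_le_of_nonneg hε fun t _ => ?_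
  refine IsUltrametricDist.norm_sum_le_of_forall_le_of_nonneg hε fun i _ => ?_
  rw [norm_neg_one_pow_mul, norm_neg_one_pow_mul]
  exact hg _ _

theorem exists_tendsto_fermionicRiemannSum [NormedRing R] [IsUltrametricDist R] [CompleteSpace R]
    (hm : Odd m) {g : (Fin r → ℕ) → R} {ρ : ℝ} (hρ : ρ < 1)
    (hg : ∀ (N : ℕ) (x y : Fin r → ℕ), ‖g (fun j => x j + m ^ N * y j) - g x‖ ≤ ρ ^ N) :
    ∃ L, Tendsto (fermionicRiemannSum m r g) atTop (𝓝 L) := by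
  refine cauchySeq_tendsto_of_complete (cauchySeq_of_le_geometric ρ 1 hρ fun N => ?_)
  rw [dist_eq_norm', one_mul]
  exact norm_fermionicRiemannSum_succ_sub_le hm (hg N)

end FermionicRiemannSum

section QEulerIntegrand

variable {R : Type*} [CommRing R] {p r : ℕ}

lemma pow_dvd_pow_pow_mul_sub_one {q : R} (hq : (p : R) ∣ q - 1) (N k : ℕ) :
    (p : R) ^ N ∣ q ^ (p ^ N * k) - 1 :=
  calc (p : R) ^ N ∣ (p : R) ^ (N + 1) := pow_dvd_pow _ N.le_succ
    _ ∣ q ^ p ^ N - 1 := by simpa using dvd_sub_pow_of_dvd_sub hq N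
    _ ∣ (q ^ p ^ N) ^ k - 1 := by simpa using sub_dvd_pow_sub_pow (q ^ p ^ N) 1 k
    _ = q ^ (p ^ N * k) - 1 := by rw [pow_mul]

def qEulerIntegrand (a b : Fin r → ℕ) (q : R) (n : ℕ) (x : Fin r → ℕ) : R :=
  q ^ (∑ j, b j * x j) * ((∑ j, a j * x j : ℕ) : R) ^ n

lemma pow_dvd_qEulerIntegrand_sub (a b : Fin r → ℕ) {q : R} (hq : (p : R) ∣ q - 1) (n N : ℕ)
    (x y : Fin r → ℕ) :
    (p : R) ^ N ∣
      qEulerIntegrand a b q n (fun j => x j + p ^ N * y j) - qEulerIntegrand a b q n x := by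
  have hlin : ∀ c : Fin r → ℕ,
      ∑ j, c j * (x j + p ^ N * y j) = ∑ j, c j * x j + p ^ N * ∑ j, c j * y j := fun c => by
    simp only [mul_add, sum_add_distrib, mul_sum, mul_left_comm]
  unfold qEulerIntegrand
  rw [hlin, hlin, pow_add]
  set A := ∑ j, a j * x j
  have hpow : (p : R) ^ N ∣ ((A + p ^ N * ∑ j, a j * y j : ℕ) : R) ^ n - (A : R) ^ n :=
    (Dvd.intro ((∑ j, a j * y j : ℕ) : R) (by push_cast; ring)).trans (sub_dvd_pow_sub_pow _ _ n)
  have hq' := pow_dvd_pow_pow_mul_sub_one hq N (∑ j, b j * y j)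
  rw [show ∀ u v X Y : R, u * v * X - u * Y = u * ((v - 1) * X + (X - Y)) by intros; ring]
  exact dvd_mul_of_dvd_right (dvd_add (dvd_mul_of_dvd_left hq' _) hpow) _

end QEulerIntegrand

lemma PadicInt.norm_le_inv_pow_of_dvd {p : ℕ} [Fact p.Prime] {x : ℤ_[p]} {N : ℕ}
    (h : (p : ℤ_[p]) ^ N ∣ x) : ‖x‖ ≤ (p : ℝ)⁻¹ ^ N := by
  rw [inv_pow, ← zpow_natCast, ← zpow_neg]
  exact (PadicInt.norm_le_pow_iff_mem_span_pow x N).mpr (Ideal.mem_span_singleton.mpr h)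

theorem changhee_multivariate_fermionic_integral_exists_general
    (p : ℕ) [Fact p.Prime] (hpodd : Odd p)
    (r : ℕ) (a b : Fin r → ℕ)
    (q : ℤ_[p]) (hq : ‖q - 1‖ < 1) (n : ℕ) :
    ∃ L : ℤ_[p],
      Filter.Tendsto
        (fun N : ℕ =>
          ∑ v : Fin r → Fin (p ^ N),
            (-1 : ℤ_[p]) ^ (∑ j, (v j : ℕ)) * q ^ (∑ j, b j * (v j : ℕ)) *
              ((∑ j, a j * (v j : ℕ) : ℕ) : ℤ_[p]) ^ n)
        Filter.atTop (nhds L) := by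
  have hp_dvd : (p : ℤ_[p]) ∣ q - 1 := (PadicInt.norm_lt_one_iff_dvd _).mp hq
  have hp_inv : (p : ℝ)⁻¹ < 1 := inv_lt_one_of_one_lt₀ (mod_cast (Fact.out : p.Prime).one_lt)
  obtain ⟨L, hL⟩ := exists_tendsto_fermionicRiemannSum hpodd hp_inv fun N x y =>
    PadicInt.norm_le_inv_pow_of_dvd (pow_dvd_qEulerIntegrand_sub a b hp_dvd n N x y)
  refine ⟨L, hL.congr fun N => ?_⟩
  simp only [fermionicRiemannSum, qEulerIntegrand, mul_assoc]

/-- Let `p` be an odd prime, `r` a positive integer, `a_j, b_j` positive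
integers, `q ∈ ℤ_p` with `|q - 1|_p < 1` and `n ∈ ℕ`. Then the multiple partial sums
`N ↦ Σ_{x_1,…,x_r=0}^{p^N - 1} (-1)^{Σ x_j} q^{Σ b_j x_j} (Σ a_j x_j)^n` converge in
`ℤ_p`; the limit is the multivariate fermionic `p`-adic `q`-integral defining
`E_{n,q}^{(r)}(a_1,…,a_r; b_1,…,b_r)`. -/
theorem changhee_multivariate_fermionic_integral_exists
    (p : ℕ) [Fact p.Prime] (hpodd : Odd p)
    (r : ℕ) (hr : 0 < r) (a b : Fin r → ℕ)
    (ha : ∀ j, 0 < a j) (hb : ∀ j, 0 < b j)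
    (q : ℤ_[p]) (hq : ‖q - 1‖ < 1) (n : ℕ) :
    ∃ L : ℤ_[p],
      Filter.Tendsto
        (fun N : ℕ =>
          ∑ v : Fin r → Fin (p ^ N),
            (-1 : ℤ_[p]) ^ (∑ j, (v j : ℕ)) * q ^ (∑ j, b j * (v j : ℕ)) *
              ((∑ j, a j * (v j : ℕ) : ℕ) : ℤ_[p]) ^ n)
        Filter.atTop (nhds L) :=
  changhee_multivariate_fermionic_integral_exists_general p hpodd r a b q hq n
end
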